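/- Let x₁, x₂, x₃, x₄, x₅ be real numbers with x₅ ≥ max{0, −2x₃, 2x₄} and x₁² + x₂² = x₅(x₅ + 2x₃)(x₅ − 2x₄). Then x₅ ≤ (x₁² + x₂²)^{1/3} + 2(x₃² + x₄²)^{1/2}. -/
import Mathlib


/-- If `x₅ ≥ max {0, −2x₃, 2x₄}` and `x₁² + x₂² = x₅ (x₅ + 2x₃)(x₅ − 2x₄)`, then
`x₅ ≤ (x₁² + x₂²)^{1/3} + 2 (x₃² + x₄²)^{1/2}`. -/
theorem x5_upper_bound (x₁ x₂ x₃ x₄ x₅ : ℝ)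
    (h : max 0 (max (-2 * x₃) (2 * x₄)) ≤ x₅)
    (heq : x₁ ^ 2 + x₂ ^ 2 = x₅ * (x₅ + 2 * x₃) * (x₅ - 2 * x₄)) :
    x₅ ≤ (x₁ ^ 2 + x₂ ^ 2) ^ ((1 : ℝ) / 3) + 2 * (x₃ ^ 2 + x₄ ^ 2) ^ ((1 : ℝ) / 2) := by
  have h5 : (0:ℝ) ≤ x₅ := le_trans (le_max_left _ _) h
  have h3 : -2 * x₃ ≤ x₅ := le_trans (le_trans (le_max_left _ _) (le_max_right _ _)) h
  have h4 : 2 * x₄ ≤ x₅ := le_trans (le_trans (le_max_right _ _) (le_max_right _ _)) h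
  set r := Real.sqrt (x₃ ^ 2 + x₄ ^ 2) with hr
  have hr0 : 0 ≤ r := Real.sqrt_nonneg _
  have hr2 : r ^ 2 = x₃ ^ 2 + x₄ ^ 2 := Real.sq_sqrt (by positivity)
  have h3r : -r ≤ x₃ ∧ x₃ ≤ r := by
    constructor <;> nlinarith [sq_nonneg (x₃ - r), sq_nonneg (x₃ + r), sq_nonneg x₄]
  have h4r : -r ≤ x₄ ∧ x₄ ≤ r := by
    constructor <;> nlinarith [sq_nonneg (x₄ - r), sq_nonneg (x₄ + r), sq_nonneg x₃]
  have hrrp : (x₃ ^ 2 + x₄ ^ 2) ^ ((1 : ℝ) / 2) = r := by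
    rw [← hr2, ← Real.rpow_natCast r 2, ← Real.rpow_mul hr0]; norm_num
  have hS0 : 0 ≤ x₁ ^ 2 + x₂ ^ 2 := by positivity
  rw [hrrp]
  rcases le_or_gt x₅ (2 * r) with hc | hc
  · have : 0 ≤ (x₁ ^ 2 + x₂ ^ 2) ^ ((1 : ℝ) / 3) := Real.rpow_nonneg hS0 _
    linarith
  · have hpos : 0 ≤ x₅ - 2 * r := by linarith
    have hcube : (x₅ - 2 * r) ^ 3 ≤ x₁ ^ 2 + x₂ ^ 2 := by
      rw [heq]
      have h1 : x₅ - 2 * r ≤ x₅ + 2 * x₃ := by linarith [h3r.1]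
      have h2 : x₅ - 2 * r ≤ x₅ - 2 * x₄ := by linarith [h4r.2]
      nlinarith [mul_le_mul h1 h2 hpos (by linarith), mul_nonneg hpos hpos]
    have key : x₅ - 2 * r ≤ (x₁ ^ 2 + x₂ ^ 2) ^ ((1 : ℝ) / 3) := by
      have := Real.rpow_le_rpow (by positivity) hcube (by norm_num : (0:ℝ) ≤ 1/3)
      calc x₅ - 2 * r = ((x₅ - 2 * r) ^ 3) ^ ((1 : ℝ) / 3) := by
            rw [← Real.rpow_natCast (x₅ - 2*r) 3, ← Real.rpow_mul hpos]; norm_num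
        _ ≤ _ := this
    linarith
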